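/- arXiv:1502.06871 — 5 statements merged into one kernel-verified Lean document; each statement's English description precedes it below -/
import Mathlib

section
/- Define α^(M)(ℓ) = ∏_{i=0}^{ℓ−1} (ℓ+3i+2)/(ℓ+3i+3) for natural ℓ ≥ 1. Then lim_{ℓ→∞} α^(M)(ℓ) = 2^(−2/3). -/
/-!
Write each factor as `x = (n + 2) / (n + 3)` with `n = ℓ + 3i`. Then
`(n + 1) / (n + 4) ≤ x ^ 3 ≤ (n + 2) / (n + 5)`, and both bounds telescope along the
progression `n = ℓ, ℓ + 3, …`: the cube of the product lies between `(ℓ + 1) / (4ℓ + 1)`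
and `(ℓ + 2) / (4ℓ + 2)`. Hence it tends to `1 / 4`, and the product to
`(1 / 4) ^ (1 / 3) = 2 ^ (-2 / 3)`.
-/

open Filter Finset Real Topology

lemma prod_range_div_add_mul_telescope (a d : ℝ) (ha : 0 < a) (hd : 0 ≤ d) (n : ℕ) :
    ∏ i ∈ range n, (a + d * i) / (a + d * i + d) = a / (a + d * n) := by
  induction n with
  | zero => simp [ha.ne']
  | succ n ih =>
    rw [prod_range_succ, ih]
    have : 0 < a + d * n := by positivity
    push_cast
    field_simp
    ring

lemma div_add_four_le_div_add_three_pow_three {n : ℝ} (hn : 0 ≤ n) :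
    (n + 1) / (n + 4) ≤ ((n + 2) / (n + 3)) ^ 3 := by
  rw [div_pow, div_le_div_iff₀ (by positivity) (by positivity)]
  nlinarith

lemma div_add_three_pow_three_le_div_add_five {n : ℝ} (hn : 0 ≤ n) :
    ((n + 2) / (n + 3)) ^ 3 ≤ (n + 2) / (n + 5) := by
  rw [div_pow, div_le_div_iff₀ (by positivity) (by positivity)]
  nlinarith [sq_nonneg (n + 2)]

lemma tendsto_of_tendsto_pow {α : Type*} {l : Filter α} {f : α → ℝ} {L : ℝ} {n : ℕ}
    (hn : n ≠ 0) (hf : ∀ x, 0 ≤ f x) (h : Tendsto (fun x ↦ f x ^ n) l (𝓝 L)) :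
    Tendsto f l (𝓝 (L ^ (n⁻¹ : ℝ))) :=
  ((continuousAt_rpow_const L n⁻¹ (Or.inr (by positivity))).tendsto.comp h).congr
    fun x ↦ pow_rpow_inv_natCast (hf x) hn

/-- The improvement factor `α^(M)(ℓ)`. -/
noncomputable def multiThresholdFactor (ℓ : ℕ) : ℝ :=
  ∏ i ∈ range ℓ, ((ℓ : ℝ) + 3 * i + 2) / ((ℓ : ℝ) + 3 * i + 3)

lemma multiThresholdFactor_nonneg (ℓ : ℕ) : 0 ≤ multiThresholdFactor ℓ :=
  prod_nonneg fun _ _ ↦ by positivity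

lemma one_add_div_le_multiThresholdFactor_pow_three (ℓ : ℕ) :
    (1 + ℓ) / (1 + 4 * ℓ) ≤ multiThresholdFactor ℓ ^ 3 := by
  have htele := prod_range_div_add_mul_telescope (ℓ + 1) 3 (by positivity) (by norm_num) ℓ
  calc ((1 + ℓ) / (1 + 4 * ℓ) : ℝ)
      = ∏ i ∈ range ℓ, ((ℓ : ℝ) + 1 + 3 * i) / (ℓ + 1 + 3 * i + 3) := by
        rw [htele]; ring
    _ ≤ ∏ i ∈ range ℓ, (((ℓ : ℝ) + 3 * i + 2) / ((ℓ : ℝ) + 3 * i + 3)) ^ 3 := by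
        gcongr with i
        have hfactor := div_add_four_le_div_add_three_pow_three (n := ℓ + 3 * i) (by positivity)
        exact hfactor.trans_eq' (by ring)
    _ = multiThresholdFactor ℓ ^ 3 := prod_pow _ _ _

lemma multiThresholdFactor_pow_three_le_two_add_div (ℓ : ℕ) :
    multiThresholdFactor ℓ ^ 3 ≤ (2 + ℓ) / (2 + 4 * ℓ) := by
  have htele := prod_range_div_add_mul_telescope (ℓ + 2) 3 (by positivity) (by norm_num) ℓ
  calc multiThresholdFactor ℓ ^ 3
      = ∏ i ∈ range ℓ, (((ℓ : ℝ) + 3 * i + 2) / ((ℓ : ℝ) + 3 * i + 3)) ^ 3 :=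
        (prod_pow _ _ _).symm
    _ ≤ ∏ i ∈ range ℓ, ((ℓ : ℝ) + 2 + 3 * i) / (ℓ + 2 + 3 * i + 3) := by
        gcongr with i
        have hfactor := div_add_three_pow_three_le_div_add_five (n := ℓ + 3 * i) (by positivity)
        exact hfactor.trans_eq (by ring)
    _ = (2 + ℓ) / (2 + 4 * ℓ) := by
        rw [htele]; ring

lemma tendsto_multiThresholdFactor_pow_three :
    Tendsto (fun ℓ ↦ multiThresholdFactor ℓ ^ 3) atTop (𝓝 (1 / 4)) := by
  have hlim (c : ℝ) :
      Tendsto (fun ℓ : ℕ ↦ (c + ℓ) / (c + 4 * ℓ)) atTop (𝓝 (1 / 4)) := by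
    simpa using tendsto_add_mul_div_add_mul_atTop_nhds c c 1 (d := 4) (by norm_num)
  exact tendsto_of_tendsto_of_tendsto_of_le_of_le (hlim 1) (hlim 2)
    one_add_div_le_multiThresholdFactor_pow_three
    multiThresholdFactor_pow_three_le_two_add_div

lemma one_div_four_rpow_inv_three :
    (1 / 4 : ℝ) ^ ((3 : ℕ)⁻¹ : ℝ) = 2 ^ (-(2 / 3) : ℝ) := by
  have h : (1 / 4 : ℝ) = 2 ^ (-2 : ℝ) := by
    rw [rpow_neg zero_le_two, rpow_two]
    norm_num
  rw [h, ← rpow_mul zero_le_two]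
  norm_num

theorem stmt6 :
    Filter.Tendsto
      (fun ℓ : ℕ => ∏ i ∈ Finset.range ℓ,
        ((ℓ : ℝ) + 3 * i + 2) / ((ℓ : ℝ) + 3 * i + 3))
      Filter.atTop (nhds ((2 : ℝ) ^ (-(2 / 3) : ℝ))) := by
  rw [← one_div_four_rpow_inv_three]
  exact tendsto_of_tendsto_pow three_ne_zero multiThresholdFactor_nonneg
    tendsto_multiThresholdFactor_pow_three
end

section
/- For every natural number ℓ ≥ 2, ∏_{i=0}^{ℓ−1} (ℓ+3i+2)/(ℓ+3i+3) > (ℓ+2)/(2(ℓ+1)), i.e., α^(M)(ℓ) > α^(S)(ℓ). -/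
/-!
Cubing each factor `x / (x + 1)` (with `x = ℓ + 3i + 2`) gives at least `(x - 1) / (x + 2)`, and
these lower bounds telescope, since `x + 2` is the next `x - 1`. Hence the cube of the product is at
least `(ℓ + 1) / (4ℓ + 1)`, which exceeds `((ℓ + 2) / (2(ℓ + 1)))³` as soon as `ℓ ≥ 2`.
-/

open Finset

lemma prod_range_div_add_telescope {c d : ℝ} (hc : 0 < c) (hd : 0 ≤ d) (n : ℕ) :
    ∏ i ∈ range n, (c + d * i) / (c + d * i + d) = c / (c + d * n) := by
  induction n with
  | zero => simp [hc.ne']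
  | succ n ih =>
    have hn : 0 < c + d * n := by positivity
    rw [prod_range_succ, ih]
    push_cast
    field_simp
    ring

lemma sub_one_div_add_two_le_div_add_one_pow_three {x : ℝ} (hx : 0 ≤ x) :
    (x - 1) / (x + 2) ≤ (x / (x + 1)) ^ 3 := by
  rw [div_pow, div_le_div_iff₀ (by positivity) (by positivity)]
  nlinarith

lemma div_add_three_mul_le_prod_pow_three {a : ℝ} (ha : 0 ≤ a) (n : ℕ) :
    (a + 1) / (a + 1 + 3 * n) ≤
      (∏ i ∈ range n, (a + 3 * i + 2) / (a + 3 * i + 3)) ^ 3 := by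
  rw [← prod_range_div_add_telescope (by positivity) (by norm_num), ← prod_pow]
  gcongr with i
  have hx : 0 ≤ a + 3 * i + 2 := by positivity
  calc (a + 1 + 3 * i) / (a + 1 + 3 * i + 3)
      = (a + 3 * i + 2 - 1) / (a + 3 * i + 2 + 2) := by ring_nf
    _ ≤ ((a + 3 * i + 2) / (a + 3 * i + 2 + 1)) ^ 3 :=
        sub_one_div_add_two_le_div_add_one_pow_three hx
    _ = ((a + 3 * i + 2) / (a + 3 * i + 3)) ^ 3 := by ring_nf

lemma div_two_mul_add_one_pow_three_lt {x : ℝ} (hx : 2 ≤ x) :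
    ((x + 2) / (2 * (x + 1))) ^ 3 < (x + 1) / (x + 1 + 3 * x) := by
  rw [div_pow, div_lt_div_iff₀ (by positivity) (by positivity)]
  nlinarith [mul_nonneg (by linarith : (0 : ℝ) ≤ x - 2) (sq_nonneg x)]

theorem stmt8 (ℓ : ℕ) (hℓ : 2 ≤ ℓ) :
    ∏ i ∈ Finset.range ℓ, ((ℓ : ℝ) + 3 * i + 2) / ((ℓ : ℝ) + 3 * i + 3) >
      ((ℓ : ℝ) + 2) / (2 * ((ℓ : ℝ) + 1)) := by
  have hℓ' : (2 : ℝ) ≤ ℓ := by exact_mod_cast hℓ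
  have hprod : 0 ≤ ∏ i ∈ range ℓ, ((ℓ : ℝ) + 3 * i + 2) / ((ℓ : ℝ) + 3 * i + 3) :=
    prod_nonneg fun i _ => by positivity
  refine lt_of_pow_lt_pow_left₀ 3 hprod ?_
  exact (div_two_mul_add_one_pow_three_lt hℓ').trans_le
    (div_add_three_mul_le_prod_pow_three ℓ.cast_nonneg ℓ)
end

section
/- The sequence α^(M)(ℓ) = ∏_{i=0}^{ℓ−1} (ℓ+3i+2)/(ℓ+3i+3) satisfies α^(M)(ℓ) > 2^(−2/3) for all ℓ ≥ 1. -/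
/-!
Set `g c = ∏_{i<ℓ} (ℓ+3i+c)/(ℓ+3i+c+1)`, so the sequence is `g 2`. The factors increase with `c`,
hence `g 0 < g 1 < g 2`, while the product `g 0 * g 1 * g 2 = ∏_{i<ℓ} (ℓ+3i)/(ℓ+3i+3)` telescopes to
`ℓ/(4ℓ) = 1/4`. Therefore `(g 2)^3 > 1/4 = (2^(-2/3))^3`.
-/

open Finset

lemma Finset.prod_range_div_succ_of_ne_zero {K : Type*} [Field K] (f : ℕ → K)
    (hf : ∀ i, f i ≠ 0) (n : ℕ) :
    ∏ i ∈ range n, f i / f (i + 1) = f 0 / f n := by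
  induction n with
  | zero => simp [div_self (hf 0)]
  | succ n ih =>
    rw [prod_range_succ, ih, div_mul_div_cancel₀ (hf n)]

lemma div_add_one_lt_div_add_one {K : Type*} [Field K] [LinearOrder K] [IsStrictOrderedRing K]
    {a b : K} (ha : 0 ≤ a) (hab : a < b) :
    a / (a + 1) < b / (b + 1) := by
  rw [div_lt_div_iff₀ (by positivity) (by linarith)]
  linarith

section ShiftedProduct

variable (x : ℝ) (n : ℕ)

noncomputable def shiftedProd (c : ℝ) : ℝ :=
  ∏ i ∈ range n, (x + 3 * i + c) / (x + 3 * i + c + 1)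

variable {x}

lemma shiftedProd_pos (hx : 0 < x) {c : ℝ} (hc : 0 ≤ c) : 0 < shiftedProd x n c :=
  prod_pos fun i _ => by positivity

lemma shiftedProd_strictMonoOn (hx : 0 < x) (hn : n ≠ 0) :
    StrictMonoOn (shiftedProd x n) (Set.Ici 0) := by
  intro c (hc : 0 ≤ c) d _ hcd
  refine prod_lt_prod_of_nonempty (fun i _ => by positivity) (fun i _ => ?_)
    (nonempty_range_iff.mpr hn)
  exact div_add_one_lt_div_add_one (by positivity) (by linarith)

lemma shiftedProd_zero_mul_one_mul_two (hx : 0 < x) :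
    shiftedProd x n 0 * shiftedProd x n 1 * shiftedProd x n 2 = x / (x + 3 * n) := by
  have hfactor : ∀ i ∈ range n,
      (x + 3 * i + 0) / (x + 3 * i + 0 + 1) * ((x + 3 * i + 1) / (x + 3 * i + 1 + 1)) *
        ((x + 3 * i + 2) / (x + 3 * i + 2 + 1)) = (x + 3 * i) / (x + 3 * ↑(i + 1)) := by
    intro i _
    have : 0 < x + 3 * (i : ℝ) := by positivity
    field_simp
    push_cast
    ring
  simp only [shiftedProd, ← prod_mul_distrib]
  rw [prod_congr rfl hfactor,
    prod_range_div_succ_of_ne_zero (fun i : ℕ => x + 3 * (i : ℝ)) (fun i => by positivity)]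
  simp

end ShiftedProduct

lemma mul_mul_lt_pow_three {R : Type*} [CommRing R] [LinearOrder R] [IsStrictOrderedRing R]
    {a b c : R} (ha : 0 < a) (hb : 0 < b) (hac : a < c) (hbc : b < c) :
    a * b * c < c ^ 3 := by
  have hc : 0 < c := ha.trans hac
  calc a * b * c < c * c * c := by gcongr
    _ = c ^ 3 := by ring

lemma two_rpow_neg_two_thirds_pow_three : ((2 : ℝ) ^ (-(2 / 3) : ℝ)) ^ 3 = 1 / 4 := by
  rw [← Real.rpow_natCast, ← Real.rpow_mul (by norm_num)]
  norm_num

theorem stmt13 (ℓ : ℕ) (hℓ : 1 ≤ ℓ) :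
    ∏ i ∈ Finset.range ℓ, ((ℓ : ℝ) + 3 * i + 2) / ((ℓ : ℝ) + 3 * i + 3) >
      (2 : ℝ) ^ (-(2 / 3) : ℝ) := by
  have hx : (0 : ℝ) < ℓ := by exact_mod_cast hℓ
  have hn : ℓ ≠ 0 := by omega
  have hmono := shiftedProd_strictMonoOn ℓ hx hn
  have h02 : shiftedProd ℓ ℓ 0 < shiftedProd ℓ ℓ 2 :=
    hmono (by norm_num) (by norm_num) (by norm_num)
  have h12 : shiftedProd ℓ ℓ 1 < shiftedProd ℓ ℓ 2 :=
    hmono (by norm_num) (by norm_num) (by norm_num)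
  have h0 := shiftedProd_pos ℓ hx le_rfl
  have h1 := shiftedProd_pos ℓ hx zero_le_one
  have hquarter : shiftedProd ℓ ℓ 0 * shiftedProd ℓ ℓ 1 * shiftedProd ℓ ℓ 2 = 1 / 4 := by
    rw [shiftedProd_zero_mul_one_mul_two ℓ hx]
    field_simp
    ring
  have hcube : ((2 : ℝ) ^ (-(2 / 3) : ℝ)) ^ 3 < shiftedProd ℓ ℓ 2 ^ 3 := by
    rw [two_rpow_neg_two_thirds_pow_three, ← hquarter]
    exact mul_mul_lt_pow_three h0 h1 h02 h12
  have hP : shiftedProd ℓ ℓ 2 =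
      ∏ i ∈ Finset.range ℓ, ((ℓ : ℝ) + 3 * i + 2) / ((ℓ : ℝ) + 3 * i + 3) := by
    simp only [shiftedProd, add_assoc]
    norm_num
  rw [← hP]
  exact lt_of_pow_lt_pow_left₀ 3 (h0.trans h02).le hcube
end

section
/- For any real W* > 0 and integer ℓ ≥ 19: W*·∏_{i=0}^{ℓ−1}(ℓ+3i+2)/(ℓ+3i+3) ≥ 1.21 · W*·(ℓ+2)/(2(ℓ+1)). -/
private lemma telesc (ℓ : ℕ) : ∀ n : ℕ,
    ∏ i ∈ Finset.range n, ((ℓ : ℝ) + 3 * i + 1) / ((ℓ : ℝ) + 3 * i + 4)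
      = ((ℓ : ℝ) + 1) / ((ℓ : ℝ) + 3 * n + 1) := by
  intro n
  induction n with
  | zero => rw [Finset.prod_range_zero]; push_cast; rw [eq_comm, mul_zero, add_zero, div_self]; positivity
  | succ n ih =>
    rw [Finset.prod_range_succ, ih]
    have h1 : ((ℓ : ℝ) + 3 * n + 1) ≠ 0 := by positivity
    have h2 : ((ℓ : ℝ) + 3 * n + 4) ≠ 0 := by positivity
    push_cast
    rw [div_mul_div_comm, div_eq_div_iff (by positivity) (by positivity)]
    ring

theorem stmt14 (Wstar : ℝ) (hW : 0 < Wstar) (ℓ : ℕ) (hℓ : 19 ≤ ℓ) :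
    Wstar * ∏ i ∈ Finset.range ℓ, ((ℓ : ℝ) + 3 * i + 2) / ((ℓ : ℝ) + 3 * i + 3) ≥
      1.21 * (Wstar * ((ℓ : ℝ) + 2) / (2 * ((ℓ : ℝ) + 1))) := by
  set x : ℝ := (ℓ : ℝ) with hx
  have hx19 : (19:ℝ) ≤ x := by rw [hx]; exact_mod_cast hℓ
  set P : ℝ := ∏ i ∈ Finset.range ℓ, (x + 3 * i + 2) / (x + 3 * i + 3) with hP
  set R : ℝ := 1.21 * ((x + 2) / (2 * (x + 1))) with hR
  have hPpos : 0 < P := by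
    apply Finset.prod_pos
    intro i _
    apply div_pos <;> positivity
  have hRpos : 0 < R := by
    rw [hR]
    have : (0:ℝ) < x + 1 := by linarith
    positivity
  -- P^3 ≥ (ℓ+1)/(4ℓ+1)
  have hcube : ((x + 1) / (4 * x + 1)) ≤ P ^ 3 := by
    have key : ∏ i ∈ Finset.range ℓ, (x + 3 * i + 1) / (x + 3 * i + 4) ≤ P ^ 3 := by
      rw [hP, ← Finset.prod_pow]
      apply Finset.prod_le_prod
      · intro i _
        apply div_nonneg <;> positivity
      · intro i _
        set m : ℝ := x + 3 * i with hm
        have hm0 : 0 ≤ m := by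
          have : (0:ℝ) ≤ (i:ℝ) := Nat.cast_nonneg i
          nlinarith
        rw [div_pow, div_le_div_iff₀ (by positivity) (by positivity)]
        nlinarith [hm0, sq_nonneg m]
    have htel := telesc ℓ ℓ
    have : ((ℓ:ℝ) + 1) / ((ℓ:ℝ) + 3 * ℓ + 1) = (x + 1) / (4 * x + 1) := by
      rw [hx]; ring_nf
    rw [this] at htel
    rw [← htel]
    exact key
  -- R^3 ≤ (ℓ+1)/(4ℓ+1)
  have hRcube : R ^ 3 ≤ (x + 1) / (4 * x + 1) := by
    rw [hR]
    have h1 : (0:ℝ) < x + 1 := by linarith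
    have hL : (1.21 * ((x + 2) / (2 * (x + 1)))) ^ 3
        = (121 * (x + 2)) ^ 3 / (200 * (x + 1)) ^ 3 := by
      rw [show (1.21:ℝ) = 121/100 by norm_num]
      field_simp
      ring
    rw [hL, div_le_div_iff₀ (by positivity) (by positivity)]
    nlinarith [sq_nonneg (x - 19), sq_nonneg x, mul_nonneg (mul_nonneg (sub_nonneg.2 hx19) (sub_nonneg.2 hx19)) (sub_nonneg.2 hx19), sq_nonneg ((x-19)*(x-19))]
  have hRP : R ≤ P := by
    apply le_of_pow_le_pow_left₀ (n := 3) (by norm_num) (le_of_lt hPpos)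
    exact le_trans hRcube hcube
  have : 1.21 * (Wstar * (x + 2) / (2 * (x + 1))) = Wstar * R := by
    rw [hR]; ring
  rw [ge_iff_le, this]
  exact mul_le_mul_of_nonneg_left hRP (le_of_lt hW)
end

section
/- Let f(i) = (ℓ+3i+2)/(ℓ+3i+3). Then for ℓ ≥ 1, log(α^(M)(ℓ)) = −Σ_{i=0}^{ℓ−1} log(1 + 1/(ℓ+3i+2)), and this sum satisfies (1/3)·log((4ℓ+3)/(ℓ+3)) ≤ Σ_{i=0}^{ℓ−1} log(1 + 1/(ℓ+3i+2)) ≤ (1/3)·log((4ℓ+2)/(ℓ+2)) + C/ℓ for some absolute constant C. -/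
/-!
Each term of the sum is squeezed between `1/(n+1) ≤ log (1 + 1/n) ≤ 1/n`, and over an arithmetic
progression of difference `d` both sides are compared with increments of `(1/d) log`:
`(1/d) log ((n+d+1)/(n+1)) ≤ 1/(n+1)` and `1/(n+d) ≤ (1/d) log ((n+d)/n)`. The lower bound then
telescopes exactly; in the upper bound the defect `1/n - 1/(n+d)` telescopes too, to at most
`1/a` for a progression starting at `a = ℓ + 2`, which gives `C = 1`.
-/

open Real Finset

lemma log_div_add_one_eq_neg_log_one_add_one_div {n : ℝ} (hn : 0 < n) :
    log (n / (n + 1)) = -log (1 + 1 / n) := by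
  rw [← log_inv, inv_eq_one_div, one_add_div hn.ne', one_div_div, add_comm]

lemma one_div_mul_log_sub_le_log_one_add_one_div {n d : ℝ} (hn : 0 < n) (hd : 0 < d) :
    1 / d * (log (n + d + 1) - log (n + 1)) ≤ log (1 + 1 / n) := by
  have hlog_sub : log (n + d + 1) - log (n + 1) ≤ d / (n + 1) := by
    rw [← log_div (by positivity) (by positivity)]
    refine (log_le_sub_one_of_pos (by positivity)).trans_eq ?_
    field_simp
    ring
  have hlog_ge : 1 / (n + 1) ≤ log (1 + 1 / n) := by
    refine le_of_eq_of_le ?_ (one_sub_inv_le_log_of_pos (by positivity))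
    field_simp
    ring
  calc 1 / d * (log (n + d + 1) - log (n + 1)) ≤ 1 / d * (d / (n + 1)) := by gcongr
    _ = 1 / (n + 1) := by field_simp
    _ ≤ log (1 + 1 / n) := hlog_ge

lemma log_one_add_one_div_le_one_div_mul_log_sub {n d : ℝ} (hn : 0 < n) (hd : 0 < d) :
    log (1 + 1 / n) ≤ 1 / d * (log (n + d) - log n) + (1 / n - 1 / (n + d)) := by
  have hlog_sub : d / (n + d) ≤ log (n + d) - log n := by
    rw [← log_div (by positivity) hn.ne']
    refine le_of_eq_of_le ?_ (one_sub_inv_le_log_of_pos (by positivity))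
    field_simp
    ring
  have hlog_le : log (1 + 1 / n) ≤ 1 / n := by
    linarith [log_le_sub_one_of_pos (show 0 < 1 + 1 / n by positivity)]
  calc log (1 + 1 / n) ≤ 1 / n := hlog_le
    _ = 1 / d * (d / (n + d)) + (1 / n - 1 / (n + d)) := by field_simp; ring
    _ ≤ 1 / d * (log (n + d) - log n) + (1 / n - 1 / (n + d)) := by gcongr

section ArithmeticProgression

variable {a d : ℝ}

lemma one_div_mul_log_le_sum_log_one_add_one_div (ha : 0 < a) (hd : 0 < d) (ℓ : ℕ) :
    1 / d * log ((a + d * ℓ + 1) / (a + 1)) ≤ ∑ i ∈ range ℓ, log (1 + 1 / (a + d * i)) := by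
  have hterm (i : ℕ) : 0 < a + d * i := by positivity
  calc 1 / d * log ((a + d * ℓ + 1) / (a + 1))
      = ∑ i ∈ range ℓ, 1 / d * (log (a + d * ↑(i + 1) + 1) - log (a + d * i + 1)) := by
        rw [← mul_sum, sum_range_sub (fun i : ℕ ↦ log (a + d * i + 1)),
          log_div (by positivity) (by positivity)]
        simp
    _ ≤ ∑ i ∈ range ℓ, log (1 + 1 / (a + d * i)) := by
        gcongr with i
        refine le_of_eq_of_le ?_ (one_div_mul_log_sub_le_log_one_add_one_div (hterm i) hd)
        push_cast
        ring_nf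

lemma sum_log_one_add_one_div_le_one_div_mul_log (ha : 0 < a) (hd : 0 < d) (ℓ : ℕ) :
    ∑ i ∈ range ℓ, log (1 + 1 / (a + d * i)) ≤ 1 / d * log ((a + d * ℓ) / a) + 1 / a := by
  have hterm (i : ℕ) : 0 < a + d * i := by positivity
  let G (i : ℕ) : ℝ := 1 / d * log (a + d * i) - 1 / (a + d * i)
  calc ∑ i ∈ range ℓ, log (1 + 1 / (a + d * i)) ≤ ∑ i ∈ range ℓ, (G (i + 1) - G i) := by
        gcongr with i
        refine (log_one_add_one_div_le_one_div_mul_log_sub (hterm i) hd).trans_eq ?_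
        simp only [G]
        push_cast
        ring_nf
    _ = 1 / d * log ((a + d * ℓ) / a) + 1 / a - 1 / (a + d * ℓ) := by
        rw [sum_range_sub, log_div (hterm ℓ).ne' ha.ne']
        simp only [G, Nat.cast_zero, mul_zero, add_zero]
        ring
    _ ≤ 1 / d * log ((a + d * ℓ) / a) + 1 / a := by
        linarith [one_div_pos.mpr (hterm ℓ)]

end ArithmeticProgression

theorem stmt16 :
    ∃ C : ℝ, ∀ ℓ : ℕ, 1 ≤ ℓ →
      Real.log (∏ i ∈ Finset.range ℓ,
          ((ℓ : ℝ) + 3 * i + 2) / ((ℓ : ℝ) + 3 * i + 3)) =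
        -∑ i ∈ Finset.range ℓ, Real.log (1 + 1 / ((ℓ : ℝ) + 3 * i + 2)) ∧
      (1 / 3) * Real.log ((4 * (ℓ : ℝ) + 3) / ((ℓ : ℝ) + 3)) ≤
        ∑ i ∈ Finset.range ℓ, Real.log (1 + 1 / ((ℓ : ℝ) + 3 * i + 2)) ∧
      ∑ i ∈ Finset.range ℓ, Real.log (1 + 1 / ((ℓ : ℝ) + 3 * i + 2)) ≤
        (1 / 3) * Real.log ((4 * (ℓ : ℝ) + 2) / ((ℓ : ℝ) + 2)) + C / ℓ := by
  refine ⟨1, fun ℓ hℓ ↦ ?_⟩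
  have hℓ_pos : (0 : ℝ) < ℓ := by exact_mod_cast hℓ
  have hprog (i : ℕ) : (ℓ : ℝ) + 3 * i + 2 = (ℓ + 2) + 3 * i := by ring
  simp only [hprog]
  refine ⟨?_, ?_, ?_⟩
  · rw [log_prod fun i _ ↦ by positivity, ← sum_neg_distrib]
    refine sum_congr rfl fun i _ ↦ ?_
    rw [← log_div_add_one_eq_neg_log_one_add_one_div (by positivity)]
    ring_nf
  · convert one_div_mul_log_le_sum_log_one_add_one_div (a := ℓ + 2) (by positivity)
      three_pos ℓ using 4 <;> ring
  · calc _ ≤ 1 / 3 * log ((ℓ + 2 + 3 * ℓ) / (ℓ + 2)) + 1 / (ℓ + 2) :=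
          sum_log_one_add_one_div_le_one_div_mul_log (by positivity) three_pos ℓ
      _ ≤ _ := by
        rw [show (ℓ : ℝ) + 2 + 3 * ℓ = 4 * ℓ + 2 by ring]
        gcongr
        linarith
end
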